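/- The free Burnside group B(2,3) on two generators of exponent 3 is finite of order 27. -/

import Mathlib

/-!
In a group of exponent 3 every element commutes with each of its conjugates, so the commutator
`⁅a, b⁆` of two generators commutes with both and `a * b ^ j = ⁅a, b⁆ ^ j * b ^ j * a`. Hence every
element is `b ^ j * a ^ i * ⁅a, b⁆ ^ k` with `i, j, k < 3`, and a two-generator group of exponent 3
has at most 27 elements. Conversely, the Heisenberg group over `ZMod 3` is a quotient of `B(2, 3)`
with 27 elements.
-/

/-- The free Burnside group `B(m, n)`: the quotient of the free group on `m`
generators by the normal closure of the set of `n`-th powers of all its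
elements. -/
def BurnsideGroup (m n : ℕ) : Type :=
  PresentedGroup {w : FreeGroup (Fin m) | ∃ x : FreeGroup (Fin m), w = x ^ n}

instance (m n : ℕ) : Group (BurnsideGroup m n) :=
  inferInstanceAs (Group (PresentedGroup _))

open Subgroup
open scoped commutatorElement

section ExponentThree

variable {G : Type*} [Group G]

theorem mul_self_eq_inv_of_pow_three {g : G} (hg : g ^ 3 = 1) : g * g = g⁻¹ := by
  rw [eq_inv_iff_mul_eq_one, ← hg, pow_three, mul_assoc]

theorem mul_mul_eq_inv_mul_inv_mul_inv_of_pow_three {x y : G} (h : (x * y) ^ 3 = 1) :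
    x * y * x = y⁻¹ * x⁻¹ * y⁻¹ := by
  rw [← mul_inv_rev, ← mul_inv_rev, eq_inv_iff_mul_eq_one, ← h, pow_three]
  group

theorem commute_conj_of_pow_three (hG : ∀ g : G, g ^ 3 = 1) (x y : G) :
    Commute x (y * x * y⁻¹) := by
  have hxy := mul_mul_eq_inv_mul_inv_mul_inv_of_pow_three (hG (x * y))
  have hxy' : x * y⁻¹ * x = y * x⁻¹ * y := by
    simpa using mul_mul_eq_inv_mul_inv_mul_inv_of_pow_three (hG (x * y⁻¹))
  calc x * (y * x * y⁻¹) = x * y * x * y⁻¹ := by group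
    _ = y⁻¹ * x⁻¹ * (y⁻¹ * y⁻¹) := by rw [hxy]; group
    _ = y * y * x⁻¹ * y := by
        rw [mul_self_eq_inv_of_pow_three (hG y⁻¹), inv_inv, mul_self_eq_inv_of_pow_three (hG y)]
    _ = y * (y * x⁻¹ * y) := by group
    _ = y * x * y⁻¹ * x := by rw [← hxy']; group

theorem commute_commutatorElement_left_of_pow_three (hG : ∀ g : G, g ^ 3 = 1) (a b : G) :
    Commute a ⁅a, b⁆ := by
  rw [commutatorElement_def, mul_assoc, mul_assoc, ← mul_assoc b]
  exact (Commute.refl a).mul_right (Commute.inv_left_iff.mp (commute_conj_of_pow_three hG a⁻¹ b))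

theorem commute_commutatorElement_right_of_pow_three (hG : ∀ g : G, g ^ 3 = 1) (a b : G) :
    Commute b ⁅a, b⁆ := by
  rw [commutatorElement_def]
  exact (commute_conj_of_pow_three hG b a).mul_right (Commute.refl b).inv_right

theorem mul_pow_eq_commutatorElement_pow_mul {a b : G} (h : Commute ⁅a, b⁆ b) (j : ℕ) :
    a * b ^ j = ⁅a, b⁆ ^ j * b ^ j * a := by
  have hconj : a * b * a⁻¹ = ⁅a, b⁆ * b := by rw [commutatorElement_def]; group
  rw [← h.mul_pow, ← hconj, conj_pow]
  group

theorem exists_eq_pow_mul_pow_mul_commutatorElement_pow (hG : ∀ g : G, g ^ 3 = 1) {a b g : G}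
    (hg : g ∈ closure {a, b}) : ∃ i j k : ℕ, g = b ^ j * a ^ i * ⁅a, b⁆ ^ k := by
  have hca : Commute ⁅a, b⁆ a := (commute_commutatorElement_left_of_pow_three hG a b).symm
  have hcb : Commute ⁅a, b⁆ b := (commute_commutatorElement_right_of_pow_three hG a b).symm
  have step : ∀ y ∈ ({a, b} : Set G), ∀ x : G, (∃ i j k : ℕ, x = b ^ j * a ^ i * ⁅a, b⁆ ^ k) →
      ∃ i j k : ℕ, y * x = b ^ j * a ^ i * ⁅a, b⁆ ^ k := by
    rintro y hy _ ⟨i, j, k, rfl⟩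
    obtain hy | hy : y = a ∨ y = b := hy <;> subst y
    · refine ⟨i + 1, j, j + k, ?_⟩
      have hc : Commute (⁅a, b⁆ ^ j) (b ^ j * a ^ (i + 1)) :=
        (hcb.pow_pow j j).mul_right (hca.pow_pow j (i + 1))
      calc a * (b ^ j * a ^ i * ⁅a, b⁆ ^ k) = a * b ^ j * a ^ i * ⁅a, b⁆ ^ k := by
            simp only [mul_assoc]
        _ = ⁅a, b⁆ ^ j * (b ^ j * a ^ (i + 1)) * ⁅a, b⁆ ^ k := by
            rw [mul_pow_eq_commutatorElement_pow_mul hcb, pow_succ']; simp only [mul_assoc]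
        _ = b ^ j * a ^ (i + 1) * ⁅a, b⁆ ^ (j + k) := by
            rw [hc.eq, pow_add ⁅a, b⁆]; simp only [mul_assoc]
    · exact ⟨i, j + 1, k, by group⟩
  induction hg using closure_induction_left with
  | one => exact ⟨0, 0, 0, by group⟩
  | mul_left y hy x _ ih => exact step y hy x ih
  | inv_mul_cancel y hy x _ ih =>
    rw [← mul_self_eq_inv_of_pow_three (hG y), mul_assoc]
    exact step y hy _ (step y hy x ih)

theorem surjective_pow_mul_pow_mul_commutatorElement_pow (hG : ∀ g : G, g ^ 3 = 1) {a b : G}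
    (hab : closure {a, b} = ⊤) :
    Function.Surjective fun t : Fin 3 × Fin 3 × Fin 3 ↦
      b ^ (t.1 : ℕ) * a ^ (t.2.1 : ℕ) * ⁅a, b⁆ ^ (t.2.2 : ℕ) := by
  intro g
  obtain ⟨i, j, k, rfl⟩ :=
    exists_eq_pow_mul_pow_mul_commutatorElement_pow hG (hab ▸ mem_top g : g ∈ closure {a, b})
  refine ⟨(Fin.ofNat 3 j, Fin.ofNat 3 i, Fin.ofNat 3 k), ?_⟩
  simp only [Fin.val_ofNat, ← pow_eq_pow_mod _ (hG _)]

end ExponentThree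

namespace BurnsideGroup

variable {m n : ℕ}

def of (i : Fin m) : BurnsideGroup m n :=
  PresentedGroup.of i

theorem closure_range_of : closure (Set.range (of : Fin m → BurnsideGroup m n)) = ⊤ :=
  PresentedGroup.closure_range_of _

theorem pow_eq_one (g : BurnsideGroup m n) : g ^ n = 1 := by
  obtain ⟨w, rfl⟩ := PresentedGroup.mk_surjective _ g
  have h := PresentedGroup.one_of_mem
    (show w ^ n ∈ {w : FreeGroup (Fin m) | ∃ x, w = x ^ n} from ⟨w, rfl⟩)
  rwa [map_pow] at h

variable {H : Type*} [Group H]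

def lift (hH : ∀ h : H, h ^ n = 1) (f : Fin m → H) : BurnsideGroup m n →* H :=
  PresentedGroup.toGroup (f := f) <| by
    rintro _ ⟨x, rfl⟩
    rw [map_pow, hH]

@[simp]
theorem lift_of (hH : ∀ h : H, h ^ n = 1) (f : Fin m → H) (i : Fin m) :
    lift hH f (of i) = f i :=
  PresentedGroup.toGroup.of _

theorem lift_surjective (hH : ∀ h : H, h ^ n = 1) {f : Fin m → H}
    (hf : closure (Set.range f) = ⊤) : Function.Surjective (lift hH f) := by
  rw [← MonoidHom.range_eq_top, eq_top_iff, ← hf, closure_le]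
  rintro _ ⟨i, rfl⟩
  exact ⟨of i, lift_of hH f i⟩

end BurnsideGroup

/-- `⟨a, b, c⟩` stands for the unitriangular matrix `[[1, a, c], [0, 1, b], [0, 0, 1]]`. -/
@[ext]
structure Heisenberg (R : Type*) where
  a : R
  b : R
  c : R
deriving DecidableEq, Fintype

namespace Heisenberg

variable {R : Type*}

def equivProd : Heisenberg R ≃ R × R × R where
  toFun x := (x.a, x.b, x.c)
  invFun t := ⟨t.1, t.2.1, t.2.2⟩

theorem card : Nat.card (Heisenberg R) = Nat.card R ^ 3 := by
  rw [Nat.card_congr equivProd, Nat.card_prod, Nat.card_prod]; ring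

variable [CommRing R]

instance : Mul (Heisenberg R) := ⟨fun x y ↦ ⟨x.a + y.a, x.b + y.b, x.c + y.c + x.a * y.b⟩⟩
instance : One (Heisenberg R) := ⟨⟨0, 0, 0⟩⟩
instance : Inv (Heisenberg R) := ⟨fun x ↦ ⟨-x.a, -x.b, -x.c + x.a * x.b⟩⟩

@[simp] theorem mul_def (x y : Heisenberg R) :
    x * y = ⟨x.a + y.a, x.b + y.b, x.c + y.c + x.a * y.b⟩ := rfl
@[simp] theorem one_def : (1 : Heisenberg R) = ⟨0, 0, 0⟩ := rfl
@[simp] theorem inv_def (x : Heisenberg R) : x⁻¹ = ⟨-x.a, -x.b, -x.c + x.a * x.b⟩ := rfl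

instance : Group (Heisenberg R) where
  mul_assoc x y z := by ext <;> simp only [mul_def] <;> ring
  one_mul x := by ext <;> simp
  mul_one x := by ext <;> simp
  inv_mul_cancel x := by ext <;> simp

theorem pow_three_eq_one_zmod_three : ∀ x : Heisenberg (ZMod 3), x ^ 3 = 1 := by
  decide

theorem closure_range_zmod_three :
    closure (Set.range ![(⟨1, 0, 0⟩ : Heisenberg (ZMod 3)), ⟨0, 1, 0⟩]) = ⊤ := by
  set X : Heisenberg (ZMod 3) := ⟨1, 0, 0⟩
  set Y : Heisenberg (ZMod 3) := ⟨0, 1, 0⟩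
  have hXY : ∀ x, ∃ i j k : Fin 3, x = X ^ (i : ℕ) * Y ^ (j : ℕ) * ⁅X, Y⁆ ^ (k : ℕ) := by
    decide
  rw [Matrix.range_cons_cons_empty, eq_top_iff]
  intro x _
  obtain ⟨i, j, k, rfl⟩ := hXY x
  have hX : X ∈ closure {X, Y} := subset_closure (by simp)
  have hY : Y ∈ closure {X, Y} := subset_closure (by simp)
  exact mul_mem (mul_mem (pow_mem hX _) (pow_mem hY _))
    (pow_mem (mul_mem (mul_mem (mul_mem hX hY) (inv_mem hX)) (inv_mem hY)) _)

end Heisenberg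

theorem burnsideGroup_two_three_finite_card_27 :
    Finite (BurnsideGroup 2 3) ∧ Nat.card (BurnsideGroup 2 3) = 27 := by
  have hgen : closure {BurnsideGroup.of 0, BurnsideGroup.of 1} =
      (⊤ : Subgroup (BurnsideGroup 2 3)) := by
    rw [← BurnsideGroup.closure_range_of]
    congr 1
    ext; simp [Fin.exists_fin_two, eq_comm]
  have hsurj := surjective_pow_mul_pow_mul_commutatorElement_pow BurnsideGroup.pow_eq_one hgen
  have hfin : Finite (BurnsideGroup 2 3) := .of_surjective _ hsurj
  refine ⟨hfin, le_antisymm ?_ ?_⟩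
  · simpa using Nat.card_le_card_of_surjective _ hsurj
  · have := Nat.card_le_card_of_surjective _ (BurnsideGroup.lift_surjective
      Heisenberg.pow_three_eq_one_zmod_three Heisenberg.closure_range_zmod_three)
    rwa [Heisenberg.card, Nat.card_zmod] at this
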